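/- arXiv:2502.11348 — 2 statements merged into one kernel-verified Lean document; each statement's English description precedes it below -/
import Mathlib

section
/- (Key negativity in the proof of Lemma 4.3, identity (4.10)) Let d1, q1 > 0 and let ũ be a single-species equilibrium for (d1,q1). Then Σ_{k=2}^{m3} f̃^3_k·ũ^3_k·(d1+q1)^{k−2}/d1^{k−1} + Σ_{i=1}^{2} Σ_{k=1}^{m_i} f̃^i_k·ũ^i_k·(d1+q1)^{m3+k−2}/d1^{m3+k−1} < 0. (This quantity equals (∂λ1/∂q)(d1,q1) · Σ_{(i,k)∈P} (ũ^i_k)², where λ1 is the principal eigenvalue of the linearization, and so the principal eigenvalue strictly decreases in the drift rate at (d1,q1).) -/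
open Finset Filter

noncomputable section

/-- Length of river segment `i` (segments are numbered 1, 2, 3; segments 1 and 2 are the
branches, segment 3 is the main river). -/
def seg (m1 m2 m3 : ℕ) (i : ℕ) : ℕ := if i = 1 then m1 else if i = 2 then m2 else m3

/-- `w` is positive on all patches of the Y-shaped network. -/
def YPos (m1 m2 m3 : ℕ) (w : ℕ → ℕ → ℝ) : Prop :=
  ∀ i k, (i = 1 ∨ i = 2 ∨ i = 3) → 1 ≤ k → k ≤ seg m1 m2 m3 i → 0 < w i k

/-- Steady-state equations on the Y-shaped network for one species `w` with dispersal rate `d`,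
drift rate `q`, intrinsic growth rate `r`, and competitor density `c` (take `c = 0` for the
single-species model).  The convention `w i 0 = w 3 m3` (for `i = 1, 2`) is part of
the predicate. -/
def YEq (m1 m2 m3 : ℕ) (d q r : ℝ) (w c : ℕ → ℕ → ℝ) : Prop :=
  w 1 0 = w 3 m3 ∧ w 2 0 = w 3 m3 ∧
  (∀ i, (i = 1 ∨ i = 2) → ∀ k, 1 ≤ k → k + 1 ≤ seg m1 m2 m3 i →
    d * w i (k - 1) - (2 * d + q) * w i k + (d + q) * w i (k + 1)
      + w i k * (r - w i k - c i k) = 0) ∧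
  (∀ k, 2 ≤ k → k + 1 ≤ m3 →
    d * w 3 (k - 1) - (2 * d + q) * w 3 k + (d + q) * w 3 (k + 1)
      + w 3 k * (r - w 3 k - c 3 k) = 0) ∧
  (∀ i, (i = 1 ∨ i = 2) →
    -(d + q) * w i (seg m1 m2 m3 i) + d * w i (seg m1 m2 m3 i - 1)
      + w i (seg m1 m2 m3 i) * (r - w i (seg m1 m2 m3 i) - c i (seg m1 m2 m3 i)) = 0) ∧
  (-d * w 3 1 + (d + q) * w 3 2 + w 3 1 * (r - w 3 1 - c 3 1) = 0) ∧
  (d * w 3 (m3 - 1) - (3 * d + q) * w 3 m3 + (d + q) * (w 1 1 + w 2 1)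
    + w 3 m3 * (r - w 3 m3 - c 3 m3) = 0)

/-- Positive equilibrium of the two-species competition patch model on the Y-shaped network. -/
def YPosEquilibrium (m1 m2 m3 : ℕ) (d1 q1 d2 q2 r : ℝ) (u v : ℕ → ℕ → ℝ) : Prop :=
  YPos m1 m2 m3 u ∧ YPos m1 m2 m3 v ∧
  YEq m1 m2 m3 d1 q1 r u v ∧ YEq m1 m2 m3 d2 q2 r v u

/-- Single-species positive equilibrium for parameters `(d, q)`. -/
def YSingleEquilibrium (m1 m2 m3 : ℕ) (d q r : ℝ) (w : ℕ → ℕ → ℝ) : Prop :=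
  YPos m1 m2 m3 w ∧ YEq m1 m2 m3 d q r w (fun _ _ => 0)

/-- The auxiliary flux sequence (`f` when built from `u` with `(d1, q1)`, `g` when built
from `v` with `(d2, q2)`): `Yf ... d q w i k = d * w i (k-1) - (d+q) * w i k` on the index
range `1 ≤ k ≤ mᵢ` for `i = 1,2` and `2 ≤ k ≤ m3` for `i = 3`, and `0` otherwise (in
particular `f 3 1 = 0` and `f i (mᵢ + 1) = 0` for `i = 1, 2`). -/
def Yf (m1 m2 m3 : ℕ) (d q : ℝ) (w : ℕ → ℕ → ℝ) (i k : ℕ) : ℝ :=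
  if i = 3 then (if 2 ≤ k ∧ k ≤ m3 then d * w 3 (k - 1) - (d + q) * w 3 k else 0)
  else (if 1 ≤ k ∧ k ≤ seg m1 m2 m3 i then d * w i (k - 1) - (d + q) * w i k else 0)

/-- The auxiliary sequence `h` built from `v`, on the same index range as `Yf`. -/
def Yh (m1 m2 m3 : ℕ) (d1 q1 d2 q2 : ℝ) (v : ℕ → ℕ → ℝ) (i k : ℕ) : ℝ :=
  if i = 3 then
    (if 2 ≤ k ∧ k ≤ m3 then (d1 - d2) * (v 3 (k - 1) - v 3 k) - (q1 - q2) * v 3 k else 0)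
  else
    (if 1 ≤ k ∧ k ≤ seg m1 m2 m3 i then
      (d1 - d2) * (v i (k - 1) - v i k) - (q1 - q2) * v i k else 0)

/-- `(d, q)` belongs to the region `S1`. -/
def S1mem (d1 q1 d q : ℝ) : Prop :=
  0 < d ∧ d ≤ d1 ∧ 0 < q ∧ q ≤ (q1 / d1) * d ∧ (d, q) ≠ (d1, q1)

/-- `(d, q)` belongs to the region `S2`. -/
def S2mem (d1 q1 d q : ℝ) : Prop :=
  d1 ≤ d ∧ (q1 / d1) * d ≤ q ∧ (d, q) ≠ (d1, q1)

/-- The linearization at a semi-trivial equilibrium `(a, 0)`, with eigenvalue `0`: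
`ψ` solves the linearized system for parameters `(d, q)` with potential `r - a`. -/
def YLinEq (m1 m2 m3 : ℕ) (d q r : ℝ) (a ψ : ℕ → ℕ → ℝ) : Prop :=
  ψ 1 0 = ψ 3 m3 ∧ ψ 2 0 = ψ 3 m3 ∧
  (∀ i, (i = 1 ∨ i = 2) → ∀ k, 1 ≤ k → k + 1 ≤ seg m1 m2 m3 i →
    d * ψ i (k - 1) - (2 * d + q) * ψ i k + (d + q) * ψ i (k + 1)
      + (r - a i k) * ψ i k = 0) ∧
  (∀ k, 2 ≤ k → k + 1 ≤ m3 →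
    d * ψ 3 (k - 1) - (2 * d + q) * ψ 3 k + (d + q) * ψ 3 (k + 1)
      + (r - a 3 k) * ψ 3 k = 0) ∧
  (∀ i, (i = 1 ∨ i = 2) →
    -(d + q) * ψ i (seg m1 m2 m3 i) + d * ψ i (seg m1 m2 m3 i - 1)
      + (r - a i (seg m1 m2 m3 i)) * ψ i (seg m1 m2 m3 i) = 0) ∧
  (-d * ψ 3 1 + (d + q) * ψ 3 2 + (r - a 3 1) * ψ 3 1 = 0) ∧
  (d * ψ 3 (m3 - 1) - (3 * d + q) * ψ 3 m3 + (d + q) * (ψ 1 1 + ψ 2 1)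
    + (r - a 3 m3) * ψ 3 m3 = 0)

/-- Time-dependent equations for one species `W` with competitor `C` on the Y-shaped network
(for `t ≥ 0`), with dispersal rate `d`, drift rate `q` and intrinsic growth rate `r`. -/
def YFlow (m1 m2 m3 : ℕ) (d q r : ℝ) (W C : ℕ → ℕ → ℝ → ℝ) : Prop :=
  (∀ t : ℝ, W 1 0 t = W 3 m3 t) ∧ (∀ t : ℝ, W 2 0 t = W 3 m3 t) ∧
  (∀ i, (i = 1 ∨ i = 2) → ∀ k, 1 ≤ k → k + 1 ≤ seg m1 m2 m3 i → ∀ t : ℝ, 0 ≤ t →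
    HasDerivAt (W i k)
      (d * W i (k - 1) t - (2 * d + q) * W i k t + (d + q) * W i (k + 1) t
        + W i k t * (r - W i k t - C i k t)) t) ∧
  (∀ k, 2 ≤ k → k + 1 ≤ m3 → ∀ t : ℝ, 0 ≤ t →
    HasDerivAt (W 3 k)
      (d * W 3 (k - 1) t - (2 * d + q) * W 3 k t + (d + q) * W 3 (k + 1) t
        + W 3 k t * (r - W 3 k t - C 3 k t)) t) ∧
  (∀ i, (i = 1 ∨ i = 2) → ∀ t : ℝ, 0 ≤ t →
    HasDerivAt (W i (seg m1 m2 m3 i))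
      (-(d + q) * W i (seg m1 m2 m3 i) t + d * W i (seg m1 m2 m3 i - 1) t
        + W i (seg m1 m2 m3 i) t
          * (r - W i (seg m1 m2 m3 i) t - C i (seg m1 m2 m3 i) t)) t) ∧
  (∀ t : ℝ, 0 ≤ t →
    HasDerivAt (W 3 1)
      (-d * W 3 1 t + (d + q) * W 3 2 t + W 3 1 t * (r - W 3 1 t - C 3 1 t)) t) ∧
  (∀ t : ℝ, 0 ≤ t →
    HasDerivAt (W 3 m3)
      (d * W 3 (m3 - 1) t - (3 * d + q) * W 3 m3 t + (d + q) * (W 1 1 t + W 2 1 t)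
        + W 3 m3 t * (r - W 3 m3 t - C 3 m3 t)) t)

/-- Solution of the two-species competition patch model on the Y-shaped network. -/
def YSolution (m1 m2 m3 : ℕ) (d1 q1 d2 q2 r : ℝ) (U V : ℕ → ℕ → ℝ → ℝ) : Prop :=
  YFlow m1 m2 m3 d1 q1 r U V ∧ YFlow m1 m2 m3 d2 q2 r V U

/-- Nonnegative, not identically zero initial data. -/
def YInit (m1 m2 m3 : ℕ) (W : ℕ → ℕ → ℝ → ℝ) : Prop :=
  (∀ i k, (i = 1 ∨ i = 2 ∨ i = 3) → 1 ≤ k → k ≤ seg m1 m2 m3 i → 0 ≤ W i k 0) ∧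
  (∃ i k, (i = 1 ∨ i = 2 ∨ i = 3) ∧ 1 ≤ k ∧ k ≤ seg m1 m2 m3 i ∧ 0 < W i k 0)

/-! ### Auxiliary machinery for the proof of `stmt_14` -/

/-- The flux function `d * w i (k-1) - (d+q) * w i k` without range restriction. -/
private def yFlux (d q : ℝ) (w : ℕ → ℕ → ℝ) (i k : ℕ) : ℝ :=
  d * w i (k - 1) - (d + q) * w i k

private lemma yShrink {d q r x y : ℝ} (hd : 0 < d) (hq : 0 < q) (hr : 0 < r)
    (h : 0 ≤ d * x - (d + q) * y) (hx : x ≤ r) : y < r := by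
  by_contra hc
  push_neg at hc
  have e1 : d * x ≤ d * r := mul_le_mul_of_nonneg_left hx hd.le
  have e2 : d * r ≤ d * y := mul_le_mul_of_nonneg_left hc hd.le
  have e3 : q * r ≤ q * y := mul_le_mul_of_nonneg_left hc hq.le
  have e4 : 0 < q * r := mul_pos hq hr
  nlinarith

private instance yDecAux (d q : ℝ) (w : ℕ → ℕ → ℝ) (i : ℕ) :
    DecidablePred fun n => ∀ j, 1 ≤ j → j ≤ n → 0 ≤ yFlux d q w i j :=
  fun _ => Classical.propDecidable _

/-- The largest `K ≤ mᵢ` such that the flux is nonnegative on `[1, K]`. -/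
private noncomputable def yK (m1 m2 m3 : ℕ) (d q : ℝ) (w : ℕ → ℕ → ℝ) (i : ℕ) : ℕ :=
  Nat.findGreatest (fun n => ∀ j, 1 ≤ j → j ≤ n → 0 ≤ yFlux d q w i j) (seg m1 m2 m3 i)

private lemma yK_le (m1 m2 m3 : ℕ) (d q : ℝ) (w : ℕ → ℕ → ℝ) (i : ℕ) :
    yK m1 m2 m3 d q w i ≤ seg m1 m2 m3 i := by
  unfold yK
  exact Nat.findGreatest_le _

private lemma yK_spec (m1 m2 m3 : ℕ) (d q : ℝ) (w : ℕ → ℕ → ℝ) (i : ℕ) :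
    ∀ j, 1 ≤ j → j ≤ yK m1 m2 m3 d q w i → 0 ≤ yFlux d q w i j := by
  intro j h1 h2
  unfold yK at h2
  have hP := Nat.findGreatest_spec
    (P := fun n => ∀ j, 1 ≤ j → j ≤ n → 0 ≤ yFlux d q w i j)
    (Nat.zero_le (seg m1 m2 m3 i)) (fun j' h1' h2' => absurd h2' (by omega))
  exact hP j h1 h2

private lemma yK_ge (m1 m2 m3 : ℕ) (d q : ℝ) (w : ℕ → ℕ → ℝ) (i k : ℕ)
    (hk : k ≤ seg m1 m2 m3 i) (h : ∀ j, 1 ≤ j → j ≤ k → 0 ≤ yFlux d q w i j) :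
    k ≤ yK m1 m2 m3 d q w i := by
  unfold yK
  exact Nat.le_findGreatest hk h

set_option maxHeartbeats 4000000

/-- **Key negativity in the proof of Lemma 4.3** (identity (4.10)). -/
theorem stmt_14
    (m1 m2 m3 : ℕ) (d1 q1 r : ℝ)
    (hm1 : 1 ≤ m1) (hm12 : m1 ≤ m2) (hm3 : 2 ≤ m3)
    (hd1 : 0 < d1) (hq1 : 0 < q1) (hr : 0 < r)
    (w : ℕ → ℕ → ℝ)
    (hw : YSingleEquilibrium m1 m2 m3 d1 q1 r w) :
    (∑ k ∈ Finset.Icc 2 m3,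
        Yf m1 m2 m3 d1 q1 w 3 k * w 3 k * ((d1 + q1) ^ (k - 2) / d1 ^ (k - 1)))
      + ((∑ k ∈ Finset.Icc 1 m1,
          Yf m1 m2 m3 d1 q1 w 1 k * w 1 k
            * ((d1 + q1) ^ (m3 + k - 2) / d1 ^ (m3 + k - 1)))
        + ∑ k ∈ Finset.Icc 1 m2,
          Yf m1 m2 m3 d1 q1 w 2 k * w 2 k
            * ((d1 + q1) ^ (m3 + k - 2) / d1 ^ (m3 + k - 1))) < 0 := by
    classical
  obtain ⟨hpos, hw10, hw20, hintB, hint3, hup, hdown, hjun⟩ := hw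
  have hd1q1 : (0:ℝ) < d1 + q1 := by linarith
  have hs1 : seg m1 m2 m3 1 = m1 := rfl
  have hs2 : seg m1 m2 m3 2 = m2 := rfl
  have hs3 : seg m1 m2 m3 3 = m3 := rfl
  have hm2 : 1 ≤ m2 := hm1.trans hm12
  have hsegpos : ∀ i, i = 1 ∨ i = 2 → 1 ≤ seg m1 m2 m3 i := by
    rintro i (rfl | rfl)
    · exact hm1
    · exact hm2
  have hseg2 : ∀ i, i = 1 ∨ i = 2 → seg m1 m2 m3 i ≤ m2 := by
    rintro i (rfl | rfl)
    · exact hm12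
    · exact le_rfl
  have wpos' : ∀ i k, i = 1 ∨ i = 2 → 1 ≤ k → k ≤ seg m1 m2 m3 i → 0 < w i k := by
    intro i k hi h1 h2
    exact hpos i k (by tauto) h1 h2
  have w3pos : ∀ k, 1 ≤ k → k ≤ m3 → 0 < w 3 k := by
    intro k h1 h2
    exact hpos 3 k (by tauto) h1 (by rwa [hs3])
  have hw0 : ∀ i, i = 1 ∨ i = 2 → w i 0 = w 3 m3 := by
    rintro i (rfl | rfl)
    · exact hw10
    · exact hw20
  -- recurrences for the flux
  have recB : ∀ i, i = 1 ∨ i = 2 → ∀ k, 1 ≤ k → k + 1 ≤ seg m1 m2 m3 i →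
      yFlux d1 q1 w i (k + 1) = yFlux d1 q1 w i k + w i k * (r - w i k) := by
    intro i hi k hk hk1
    have h := hintB i hi k hk hk1
    simp only [sub_zero] at h
    simp only [yFlux, Nat.add_sub_cancel]
    linarith
  have rec3 : ∀ k, 2 ≤ k → k + 1 ≤ m3 →
      yFlux d1 q1 w 3 (k + 1) = yFlux d1 q1 w 3 k + w 3 k * (r - w 3 k) := by
    intro k hk hk1
    have h := hint3 k hk hk1
    simp only [sub_zero] at h
    simp only [yFlux, Nat.add_sub_cancel]
    linarith
  have topB : ∀ i, i = 1 ∨ i = 2 →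
      yFlux d1 q1 w i (seg m1 m2 m3 i)
        + w i (seg m1 m2 m3 i) * (r - w i (seg m1 m2 m3 i)) = 0 := by
    intro i hi
    have h := hup i hi
    simp only [sub_zero] at h
    simp only [yFlux]
    linarith
  have rootE : yFlux d1 q1 w 3 2 = w 3 1 * (r - w 3 1) := by
    have h := hdown
    simp only [sub_zero] at h
    simp only [yFlux, show (2:ℕ) - 1 = 1 from rfl]
    linarith
  have junE : yFlux d1 q1 w 1 1 + yFlux d1 q1 w 2 1
      = yFlux d1 q1 w 3 m3 + w 3 m3 * (r - w 3 m3) := by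
    have h := hjun
    simp only [sub_zero] at h
    simp only [yFlux, show (1:ℕ) - 1 = 0 from rfl]
    rw [hw10, hw20]
    linarith
  -- Key impossibility on a branch: nonnegative flux with small upstream neighbour
  have lemA : ∀ i, i = 1 ∨ i = 2 → ∀ k, 1 ≤ k → k ≤ seg m1 m2 m3 i →
      0 ≤ yFlux d1 q1 w i k → w i (k - 1) ≤ r → False := by
    intro i hi k hk hkm hF hwr
    have main : ∀ j, k ≤ j → j ≤ seg m1 m2 m3 i →
        0 ≤ yFlux d1 q1 w i j ∧ w i (j - 1) ≤ r := by
      intro j hj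
      induction j, hj using Nat.le_induction with
      | base => exact fun _ => ⟨hF, hwr⟩
      | succ j hj ih =>
        intro hj1
        obtain ⟨h1, h2⟩ := ih (by omega)
        have hj' : 1 ≤ j := hk.trans hj
        have hwj : 0 < w i j := wpos' i j hi hj' (by omega)
        have hlt : w i j < r := yShrink hd1 hq1 hr (by simpa [yFlux] using h1) h2
        have hrec := recB i hi j hj' (by omega)
        constructor
        · rw [hrec]
          nlinarith [mul_pos hwj (sub_pos.2 hlt)]
        · simpa using hlt.le
    obtain ⟨h1, h2⟩ := main (seg m1 m2 m3 i) hkm le_rfl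
    have hwm : 0 < w i (seg m1 m2 m3 i) := wpos' i _ hi (hsegpos i hi) le_rfl
    have hlt : w i (seg m1 m2 m3 i) < r :=
      yShrink hd1 hq1 hr (by simpa [yFlux] using h1) h2
    have htop := topB i hi
    nlinarith [mul_pos hwm (sub_pos.2 hlt)]
  -- Same on the main stem
  have lemB : ∀ k, 2 ≤ k → k ≤ m3 →
      0 ≤ yFlux d1 q1 w 3 k → w 3 (k - 1) ≤ r → False := by
    intro k hk hkm hF hwr
    have main : ∀ j, k ≤ j → j ≤ m3 →
        0 ≤ yFlux d1 q1 w 3 j ∧ w 3 (j - 1) ≤ r := by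
      intro j hj
      induction j, hj using Nat.le_induction with
      | base => exact fun _ => ⟨hF, hwr⟩
      | succ j hj ih =>
        intro hj1
        obtain ⟨h1, h2⟩ := ih (by omega)
        have hwj : 0 < w 3 j := w3pos j (by omega) (by omega)
        have hlt : w 3 j < r := yShrink hd1 hq1 hr (by simpa [yFlux] using h1) h2
        have hrec := rec3 j (hk.trans hj) (by omega)
        constructor
        · rw [hrec]
          nlinarith [mul_pos hwj (sub_pos.2 hlt)]
        · simpa using hlt.le
    obtain ⟨h1, h2⟩ := main m3 hkm le_rfl
    have hwm3 : 0 < w 3 m3 := w3pos m3 (by omega) le_rfl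
    have hlt : w 3 m3 < r := yShrink hd1 hq1 hr (by simpa [yFlux] using h1) h2
    have hsum : 0 < yFlux d1 q1 w 1 1 + yFlux d1 q1 w 2 1 := by
      rw [junE]
      nlinarith [mul_pos hwm3 (sub_pos.2 hlt)]
    rcases le_or_gt 0 (yFlux d1 q1 w 1 1) with hb | hb
    · exact lemA 1 (Or.inl rfl) 1 le_rfl (by rw [hs1]; exact hm1) hb
        (by rw [show (1:ℕ) - 1 = 0 from rfl, hw10]; exact hlt.le)
    · exact lemA 2 (Or.inr rfl) 1 le_rfl (by rw [hs2]; exact hm2) (by linarith)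
        (by rw [show (1:ℕ) - 1 = 0 from rfl, hw20]; exact hlt.le)
  -- downstream end exceeds r, flux at 2 negative
  have hw31r : r < w 3 1 := by
    by_contra hc
    push_neg at hc
    have h0 : 0 < w 3 1 := w3pos 1 le_rfl (by omega)
    have hF2 : 0 ≤ yFlux d1 q1 w 3 2 := by
      rw [rootE]
      exact mul_nonneg h0.le (by linarith)
    exact lemB 2 le_rfl hm3 hF2 (by rw [show (2:ℕ) - 1 = 1 from rfl]; exact hc)
  have hF32 : yFlux d1 q1 w 3 2 < 0 := by
    have h0 : 0 < w 3 1 := w3pos 1 le_rfl (by omega)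
    rw [rootE]
    exact mul_neg_of_pos_of_neg h0 (by linarith)
  -- all fluxes on the stem are negative
  have lemD : ∀ k, 2 ≤ k → k ≤ m3 → yFlux d1 q1 w 3 k < 0 := by
    intro k hk
    induction k, hk using Nat.le_induction with
    | base => exact fun _ => hF32
    | succ j hj ih =>
      intro hj1
      have hFj : yFlux d1 q1 w 3 j < 0 := ih (by omega)
      by_contra hc
      push_neg at hc
      have hrec := rec3 j hj (by omega)
      have hwj : 0 < w 3 j := w3pos j (by omega) (by omega)
      have hprod : 0 < w 3 j * (r - w 3 j) := by rw [hrec] at hc; linarith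
      have hwlt : w 3 j < r := by
        by_contra hcc
        push_neg at hcc
        nlinarith [mul_nonneg hwj.le (sub_nonneg.2 hcc)]
      exact lemB (j + 1) (by omega) hj1 hc (by rw [Nat.add_sub_cancel]; exact hwlt.le)
  -- the sum of the two branch base fluxes is negative
  have lemE : yFlux d1 q1 w 1 1 + yFlux d1 q1 w 2 1 < 0 := by
    by_contra hc
    push_neg at hc
    have hF3 : yFlux d1 q1 w 3 m3 < 0 := lemD m3 hm3 le_rfl
    have hwm3 : 0 < w 3 m3 := w3pos m3 (by omega) le_rfl
    have hprod : 0 < w 3 m3 * (r - w 3 m3) := by linarith [junE]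
    have hlt : w 3 m3 < r := by
      by_contra hcc
      push_neg at hcc
      nlinarith [mul_nonneg hwm3.le (sub_nonneg.2 hcc)]
    rcases le_or_gt 0 (yFlux d1 q1 w 1 1) with hb | hb
    · exact lemA 1 (Or.inl rfl) 1 le_rfl (by rw [hs1]; exact hm1) hb
        (by rw [show (1:ℕ) - 1 = 0 from rfl, hw10]; exact hlt.le)
    · exact lemA 2 (Or.inr rfl) 1 le_rfl (by rw [hs2]; exact hm2) (by linarith)
        (by rw [show (1:ℕ) - 1 = 0 from rfl, hw20]; exact hlt.le)
  -- properties of the threshold yK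
  have hKle : ∀ i, yK m1 m2 m3 d1 q1 w i ≤ seg m1 m2 m3 i := fun i => yK_le _ _ _ _ _ _ _
  have hKspec : ∀ i j, 1 ≤ j → j ≤ yK m1 m2 m3 d1 q1 w i → 0 ≤ yFlux d1 q1 w i j :=
    fun i => yK_spec m1 m2 m3 d1 q1 w i
  have hKneg : ∀ i, i = 1 ∨ i = 2 → ∀ k, yK m1 m2 m3 d1 q1 w i < k →
      k ≤ seg m1 m2 m3 i → yFlux d1 q1 w i k < 0 := by
    intro i hi k hKk hkm
    have main : ∀ k, yK m1 m2 m3 d1 q1 w i + 1 ≤ k → k ≤ seg m1 m2 m3 i →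
        yFlux d1 q1 w i k < 0 := by
      intro k hk
      induction k, hk using Nat.le_induction with
      | base =>
        intro hmB
        by_contra hcb
        push_neg at hcb
        have hP : ∀ j, 1 ≤ j → j ≤ yK m1 m2 m3 d1 q1 w i + 1 → 0 ≤ yFlux d1 q1 w i j := by
          intro j h1 h2
          rcases Nat.lt_or_ge j (yK m1 m2 m3 d1 q1 w i + 1) with hj | hj
          · exact hKspec i j h1 (by omega)
          · have : j = yK m1 m2 m3 d1 q1 w i + 1 := by omega
            rw [this]
            exact hcb
        have := yK_ge m1 m2 m3 d1 q1 w i _ hmB hP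
        omega
      | succ j hj ih =>
        intro hj1
        have hFj : yFlux d1 q1 w i j < 0 := ih (by omega)
        by_contra hcb
        push_neg at hcb
        have hrec := recB i hi j (by omega) hj1
        have hwj : 0 < w i j := wpos' i j hi (by omega) (by omega)
        have hprod : 0 < w i j * (r - w i j) := by rw [hrec] at hcb; linarith
        have hwlt : w i j < r := by
          by_contra hcc
          push_neg at hcc
          nlinarith [mul_nonneg hwj.le (sub_nonneg.2 hcc)]
        exact lemA i hi (j + 1) (by omega) hj1 hcb
          (by rw [Nat.add_sub_cancel]; exact hwlt.le)
    exact main k (by omega) hkm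
  have hKw : ∀ i, i = 1 ∨ i = 2 → ∀ j, 1 ≤ j → j + 1 ≤ yK m1 m2 m3 d1 q1 w i →
      r < w i j := by
    intro i hi j hj hjK
    by_contra hc
    push_neg at hc
    have hF1 : 0 ≤ yFlux d1 q1 w i (j + 1) := hKspec i (j + 1) (by omega) hjK
    exact lemA i hi (j + 1) (by omega) (le_trans hjK (hKle i)) hF1
      (by rw [Nat.add_sub_cancel]; exact hc)
  have hnotboth : yK m1 m2 m3 d1 q1 w 1 = 0 ∨ yK m1 m2 m3 d1 q1 w 2 = 0 := by
    by_contra hc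
    push_neg at hc
    obtain ⟨h1, h2⟩ := hc
    have e1 := hKspec 1 1 le_rfl (by omega)
    have e2 := hKspec 2 1 le_rfl (by omega)
    linarith
  -- the pairing invariant
  have Hpair : ∀ a b, (a = 1 ∧ b = 2) ∨ (a = 2 ∧ b = 1) → yK m1 m2 m3 d1 q1 w b = 0 →
      ∀ k, 1 ≤ k → k ≤ yK m1 m2 m3 d1 q1 w a → k ≤ seg m1 m2 m3 b →
      yFlux d1 q1 w a k + yFlux d1 q1 w b k ≤ 0 ∧ w a k ≤ w b k := by
    intro a b hab hKb k hk
    have ha : a = 1 ∨ a = 2 := by tauto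
    have hb : b = 1 ∨ b = 2 := by tauto
    induction k, hk using Nat.le_induction with
    | base =>
      intro h1K h1b
      have hsum : yFlux d1 q1 w a 1 + yFlux d1 q1 w b 1 < 0 := by
        rcases hab with ⟨rfl, rfl⟩ | ⟨rfl, rfl⟩
        · exact lemE
        · linarith
      refine ⟨hsum.le, ?_⟩
      have hFa : 0 ≤ yFlux d1 q1 w a 1 := hKspec a 1 le_rfl h1K
      have hFb : yFlux d1 q1 w b 1 < 0 := hKneg b hb 1 (by omega) h1b
      have ea : yFlux d1 q1 w a 1 = d1 * w 3 m3 - (d1 + q1) * w a 1 := by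
        simp only [yFlux, show (1:ℕ) - 1 = 0 from rfl, hw0 a ha]
      have eb : yFlux d1 q1 w b 1 = d1 * w 3 m3 - (d1 + q1) * w b 1 := by
        simp only [yFlux, show (1:ℕ) - 1 = 0 from rfl, hw0 b hb]
      have hmm : (d1 + q1) * w a 1 ≤ (d1 + q1) * w b 1 := by linarith
      exact le_of_mul_le_mul_left hmm hd1q1
    | succ k hk ih =>
      intro hK hsb
      obtain ⟨hsum, hwle⟩ := ih (by omega) (by omega)
      have hwak : r < w a k := hKw a ha k hk hK
      have hwbk0 : 0 < w b k := wpos' b k hb hk (by omega)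
      have hwbk : r < w b k := lt_of_lt_of_le hwak hwle
      have hreca := recB a ha k hk (le_trans hK (hKle a))
      have hrecb := recB b hb k hk hsb
      have hwak0 : 0 < w a k := wpos' a k ha hk (by have := hKle a; omega)
      have hsum' : yFlux d1 q1 w a (k + 1) + yFlux d1 q1 w b (k + 1) ≤ 0 := by
        rw [hreca, hrecb]
        nlinarith [mul_pos hwak0 (sub_pos.2 hwak), mul_pos hwbk0 (sub_pos.2 hwbk)]
      refine ⟨hsum', ?_⟩
      have hFa1 : 0 ≤ yFlux d1 q1 w a (k + 1) := hKspec a (k + 1) (by omega) hK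
      have ea : yFlux d1 q1 w a (k + 1) = d1 * w a k - (d1 + q1) * w a (k + 1) := by
        simp only [yFlux, Nat.add_sub_cancel]
      have eb : yFlux d1 q1 w b (k + 1) = d1 * w b k - (d1 + q1) * w b (k + 1) := by
        simp only [yFlux, Nat.add_sub_cancel]
      have hd1w : d1 * w a k ≤ d1 * w b k := mul_le_mul_of_nonneg_left hwle hd1.le
      have hmm : (d1 + q1) * w a (k + 1) ≤ (d1 + q1) * w b (k + 1) := by linarith
      exact le_of_mul_le_mul_left hmm hd1q1
  -- the supercritical branch is not longer than the other branch
  have KleB : ∀ a b, (a = 1 ∧ b = 2) ∨ (a = 2 ∧ b = 1) → yK m1 m2 m3 d1 q1 w b = 0 →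
      yK m1 m2 m3 d1 q1 w a ≤ seg m1 m2 m3 b := by
    intro a b hab hKb
    by_contra hc
    push_neg at hc
    have ha : a = 1 ∨ a = 2 := by tauto
    have hb : b = 1 ∨ b = 2 := by tauto
    have hk1 : 1 ≤ seg m1 m2 m3 b := hsegpos b hb
    obtain ⟨hsum, hwle⟩ := Hpair a b hab hKb (seg m1 m2 m3 b) hk1 (by omega) le_rfl
    have hwak : r < w a (seg m1 m2 m3 b) := hKw a ha _ hk1 (by omega)
    have hwbk : r < w b (seg m1 m2 m3 b) := lt_of_lt_of_le hwak hwle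
    have hwbk0 : 0 < w b (seg m1 m2 m3 b) := wpos' b _ hb hk1 le_rfl
    have htop := topB b hb
    have hFbk : yFlux d1 q1 w b (seg m1 m2 m3 b) < 0 := hKneg b hb _ (by omega) le_rfl
    nlinarith [mul_pos hwbk0 (sub_pos.2 hwbk)]
  -- conversion of Yf to yFlux on the relevant ranges
  have hYf3 : ∀ k, 2 ≤ k → k ≤ m3 → Yf m1 m2 m3 d1 q1 w 3 k = yFlux d1 q1 w 3 k := by
    intro k h1 h2
    simp [Yf, yFlux, h1, h2]
  have hYfB : ∀ i, i = 1 ∨ i = 2 → ∀ k, 1 ≤ k → k ≤ seg m1 m2 m3 i →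
      Yf m1 m2 m3 d1 q1 w i k = yFlux d1 q1 w i k := by
    rintro i (rfl | rfl) k h1 h2 <;> simp [Yf, yFlux, h1, h2]
  -- the stem part of the sum is negative
  have hS3 : (∑ k ∈ Finset.Icc 2 m3,
      Yf m1 m2 m3 d1 q1 w 3 k * w 3 k * ((d1 + q1) ^ (k - 2) / d1 ^ (k - 1))) < 0 := by
    have hne : (Finset.Icc 2 m3).Nonempty := ⟨2, by simp [hm3]⟩
    have hterm : ∀ k ∈ Finset.Icc 2 m3,
        Yf m1 m2 m3 d1 q1 w 3 k * w 3 k * ((d1 + q1) ^ (k - 2) / d1 ^ (k - 1))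
          < (fun _ => (0:ℝ)) k := by
      intro k hkmem
      rw [Finset.mem_Icc] at hkmem
      rw [hYf3 k hkmem.1 hkmem.2]
      have hF := lemD k hkmem.1 hkmem.2
      have hwk := w3pos k (by omega) hkmem.2
      have hrho : 0 < (d1 + q1) ^ (k - 2) / d1 ^ (k - 1) := by positivity
      exact mul_neg_of_neg_of_pos (mul_neg_of_neg_of_pos hF hwk) hrho
    have := Finset.sum_lt_sum_of_nonempty hne hterm
    simpa using this
  -- the branch part of the sum is nonpositive
  have hSB : (∑ k ∈ Finset.Icc 1 m1,
        Yf m1 m2 m3 d1 q1 w 1 k * w 1 k * ((d1 + q1) ^ (m3 + k - 2) / d1 ^ (m3 + k - 1)))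
      + (∑ k ∈ Finset.Icc 1 m2,
        Yf m1 m2 m3 d1 q1 w 2 k * w 2 k * ((d1 + q1) ^ (m3 + k - 2) / d1 ^ (m3 + k - 1)))
      ≤ 0 := by
    obtain ⟨a, b, hab, hKb⟩ : ∃ a b, ((a = 1 ∧ b = 2) ∨ (a = 2 ∧ b = 1)) ∧
        yK m1 m2 m3 d1 q1 w b = 0 := by
      rcases hnotboth with h | h
      · exact ⟨2, 1, Or.inr ⟨rfl, rfl⟩, h⟩
      · exact ⟨1, 2, Or.inl ⟨rfl, rfl⟩, h⟩
    have ha : a = 1 ∨ a = 2 := by tauto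
    have hb : b = 1 ∨ b = 2 := by tauto
    -- padded summand
    set T : ℕ → ℕ → ℝ := fun i k =>
      Yf m1 m2 m3 d1 q1 w i k * w i k * ((d1 + q1) ^ (m3 + k - 2) / d1 ^ (m3 + k - 1))
      with hT
    have pad : ∀ i, i = 1 ∨ i = 2 →
        (∑ k ∈ Finset.Icc 1 (seg m1 m2 m3 i), T i k)
          = ∑ k ∈ Finset.Icc 1 m2, (if k ≤ seg m1 m2 m3 i then T i k else 0) := by
      intro i hi
      rw [show (∑ k ∈ Finset.Icc 1 (seg m1 m2 m3 i), T i k)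
          = ∑ k ∈ Finset.Icc 1 (seg m1 m2 m3 i),
              (if k ≤ seg m1 m2 m3 i then T i k else 0) from
        Finset.sum_congr rfl (fun k hkmem => by
          rw [Finset.mem_Icc] at hkmem
          rw [if_pos hkmem.2])]
      exact Finset.sum_subset
        (Finset.Icc_subset_Icc_right (hseg2 i hi))
        (fun x hx hnx => by
          rw [Finset.mem_Icc] at hx
          rw [if_neg]
          intro hxle
          exact hnx (Finset.mem_Icc.2 ⟨hx.1, hxle⟩))
    have keybound : (∑ k ∈ Finset.Icc 1 (seg m1 m2 m3 a), T a k)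
        + (∑ k ∈ Finset.Icc 1 (seg m1 m2 m3 b), T b k) ≤ 0 := by
      rw [pad a ha, pad b hb, ← Finset.sum_add_distrib]
      apply Finset.sum_nonpos
      intro k hkmem
      rw [Finset.mem_Icc] at hkmem
      have hk1 : 1 ≤ k := hkmem.1
      by_cases hka : k ≤ yK m1 m2 m3 d1 q1 w a
      · have hksa : k ≤ seg m1 m2 m3 a := hka.trans (hKle a)
        have hksb : k ≤ seg m1 m2 m3 b := hka.trans (KleB a b hab hKb)
        rw [if_pos hksa, if_pos hksb]
        obtain ⟨hsum, hwle⟩ := Hpair a b hab hKb k hk1 hka hksb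
        have hFa : 0 ≤ yFlux d1 q1 w a k := hKspec a k hk1 hka
        have hwb0 : 0 < w b k := wpos' b k hb hk1 hksb
        have hrho : 0 ≤ (d1 + q1) ^ (m3 + k - 2) / d1 ^ (m3 + k - 1) := by positivity
        rw [hT]
        simp only [hYfB a ha k hk1 hksa, hYfB b hb k hk1 hksb]
        have e1 : yFlux d1 q1 w a k * w a k ≤ yFlux d1 q1 w a k * w b k :=
          mul_le_mul_of_nonneg_left hwle hFa
        have e2 : (yFlux d1 q1 w a k + yFlux d1 q1 w b k) * w b k ≤ 0 :=
          mul_nonpos_iff.2 (Or.inr ⟨hsum, hwb0.le⟩)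
        rw [add_mul] at e2
        have e3 : yFlux d1 q1 w a k * w a k + yFlux d1 q1 w b k * w b k ≤ 0 := by
          linarith
        calc yFlux d1 q1 w a k * w a k * ((d1 + q1) ^ (m3 + k - 2) / d1 ^ (m3 + k - 1))
            + yFlux d1 q1 w b k * w b k * ((d1 + q1) ^ (m3 + k - 2) / d1 ^ (m3 + k - 1))
            = (yFlux d1 q1 w a k * w a k + yFlux d1 q1 w b k * w b k)
              * ((d1 + q1) ^ (m3 + k - 2) / d1 ^ (m3 + k - 1)) := by ring
          _ ≤ 0 := mul_nonpos_iff.2 (Or.inr ⟨e3, hrho⟩)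
      · push_neg at hka
        have hsingle : ∀ i, i = 1 ∨ i = 2 → yK m1 m2 m3 d1 q1 w i < k →
            (if k ≤ seg m1 m2 m3 i then T i k else 0) ≤ 0 := by
          intro i hi hKik
          by_cases hks : k ≤ seg m1 m2 m3 i
          · rw [if_pos hks, hT]
            simp only [hYfB i hi k hk1 hks]
            have hF := hKneg i hi k hKik hks
            have hwk := wpos' i k hi hk1 hks
            have hrho : 0 < (d1 + q1) ^ (m3 + k - 2) / d1 ^ (m3 + k - 1) := by positivity
            exact (mul_neg_of_neg_of_pos (mul_neg_of_neg_of_pos hF hwk) hrho).le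
          · rw [if_neg hks]
        have h1 := hsingle a ha hka
        have h2 := hsingle b hb (by omega)
        linarith
    rcases hab with ⟨rfl, rfl⟩ | ⟨rfl, rfl⟩
    · rw [hs1, hs2] at keybound
      simpa [hT] using keybound
    · rw [hs1, hs2] at keybound
      simp only [hT] at keybound
      linarith
  linarith
end
end

section
/- (Claim 4 in the proof of Theorem 3.5) Assume (d2,q2) ∈ S1 and let (u,v) be a positive equilibrium. If f^3_{m3} > 0, then g^3_{m3} > 0 and u^3_{m3} + v^3_{m3} < r. -/
open Finset Filter

noncomputable section

set_option maxHeartbeats 1000000 in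
/-- **Claim 4 in the proof of Theorem 3.5**. -/
theorem stmt_19
    (m1 m2 m3 : ℕ) (d1 q1 d2 q2 r : ℝ)
    (hm1 : 1 ≤ m1) (hm12 : m1 ≤ m2) (hm3 : 2 ≤ m3)
    (hd1 : 0 < d1) (hq1 : 0 < q1) (hr : 0 < r)
    (hS1 : S1mem d1 q1 d2 q2)
    (u v : ℕ → ℕ → ℝ)
    (heq : YPosEquilibrium m1 m2 m3 d1 q1 d2 q2 r u v)
    (hf : 0 < Yf m1 m2 m3 d1 q1 u 3 m3) :
    0 < Yf m1 m2 m3 d2 q2 v 3 m3 ∧ u 3 m3 + v 3 m3 < r := by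
  obtain ⟨hupos, hvpos, hueq, hveq⟩ := heq
  obtain ⟨hd2, hd21, hq2, hq21, -⟩ := hS1
  have hseg3 : seg m1 m2 m3 3 = m3 := by simp [seg]
  have hu : ∀ k, 1 ≤ k → k ≤ m3 → 0 < u 3 k := fun k h1 h2 =>
    hupos 3 k (by norm_num) h1 (by rw [hseg3]; exact h2)
  have hv : ∀ k, 1 ≤ k → k ≤ m3 → 0 < v 3 k := fun k h1 h2 =>
    hvpos 3 k (by norm_num) h1 (by rw [hseg3]; exact h2)
  -- parameter inequalities from S1
  have hq2le : q2 * d1 ≤ q1 * d2 := by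
    rw [div_mul_eq_mul_div, le_div_iff₀ hd1] at hq21
    exact hq21
  have hq2q1 : q2 ≤ q1 := by nlinarith
  have hsum : d2 + q2 ≤ d1 + q1 := by linarith
  -- value lemmas for the flux sequences
  have hfval : ∀ k, 2 ≤ k → k ≤ m3 →
      Yf m1 m2 m3 d1 q1 u 3 k = d1 * u 3 (k-1) - (d1+q1) * u 3 k := by
    intro k h2 hm; simp [Yf, h2, hm]
  have hgval : ∀ k, 2 ≤ k → k ≤ m3 →
      Yf m1 m2 m3 d2 q2 v 3 k = d2 * v 3 (k-1) - (d2+q2) * v 3 k := by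
    intro k h2 hm; simp [Yf, h2, hm]
  have hf1 : Yf m1 m2 m3 d1 q1 u 3 1 = 0 := by simp [Yf]
  have hg1 : Yf m1 m2 m3 d2 q2 v 3 1 = 0 := by simp [Yf]
  -- recursions for the fluxes
  have hfrec : ∀ k, 1 ≤ k → k + 1 ≤ m3 →
      Yf m1 m2 m3 d1 q1 u 3 (k+1)
        = Yf m1 m2 m3 d1 q1 u 3 k + u 3 k * (r - u 3 k - v 3 k) := by
    intro k h1 h1m
    rcases eq_or_lt_of_le h1 with h | h
    · -- k = 1
      have hdown := hueq.2.2.2.2.2.1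
      have e1 : k + 1 = 2 := by omega
      have e2 : k = 1 := by omega
      rw [e1, e2, hfval 2 (by omega) (by omega), hf1]
      norm_num
      linarith
    · have h2 : 2 ≤ k := h
      have hint := hueq.2.2.2.1 k h2 h1m
      rw [hfval (k+1) (by omega) (by omega), hfval k h2 (by omega)]
      simp only [Nat.add_sub_cancel]
      linarith
  have hgrec : ∀ k, 1 ≤ k → k + 1 ≤ m3 →
      Yf m1 m2 m3 d2 q2 v 3 (k+1)
        = Yf m1 m2 m3 d2 q2 v 3 k + v 3 k * (r - u 3 k - v 3 k) := by
    intro k h1 h1m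
    rcases eq_or_lt_of_le h1 with h | h
    · have hdown := hveq.2.2.2.2.2.1
      have e1 : k + 1 = 2 := by omega
      have e2 : k = 1 := by omega
      rw [e1, e2, hgval 2 (by omega) (by omega), hg1]
      norm_num
      linarith
    · have h2 : 2 ≤ k := h
      have hint := hveq.2.2.2.1 k h2 h1m
      rw [hgval (k+1) (by omega) (by omega), hgval k h2 (by omega)]
      simp only [Nat.add_sub_cancel]
      linarith
  -- Lemma A : f k > 0, g k > 0, sigma k <= 0 is impossible
  have lemA : ∀ k, 2 ≤ k → k ≤ m3 → 0 < Yf m1 m2 m3 d1 q1 u 3 k →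
      0 < Yf m1 m2 m3 d2 q2 v 3 k → r - u 3 k - v 3 k ≤ 0 → False := by
    intro k
    induction k using Nat.strong_induction_on with
    | _ k ih =>
      intro hk2 hkm hfk hgk hs
      have huk := hu k (by omega) hkm
      have hvk := hv k (by omega) hkm
      have hum := hu (k-1) (by omega) (by omega)
      have hvm := hv (k-1) (by omega) (by omega)
      rw [hfval k hk2 hkm] at hfk
      rw [hgval k hk2 hkm] at hgk
      have huk1 : u 3 k < u 3 (k-1) := by nlinarith
      have hvk1 : v 3 k < v 3 (k-1) := by nlinarith
      have hs1 : r - u 3 (k-1) - v 3 (k-1) < 0 := by linarith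
      rcases eq_or_lt_of_le hk2 with hk | hk
      · -- k = 2 : contradiction with downstream equation
        have hdown := hueq.2.2.2.2.2.1
        rw [← hk] at hfk hs1
        norm_num at hfk hs1
        have h1pos := hu 1 (by omega) (by omega)
        nlinarith
      · -- k ≥ 3 : step down
        have hk3 : 3 ≤ k := hk
        have hrecf := hfrec (k-1) (by omega) (by omega)
        have hrecg := hgrec (k-1) (by omega) (by omega)
        rw [show k - 1 + 1 = k from by omega] at hrecf hrecg
        rw [hfval k hk2 hkm] at hrecf
        rw [hgval k hk2 hkm] at hrecg
        have hfprev : 0 < Yf m1 m2 m3 d1 q1 u 3 (k-1) := by nlinarith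
        have hgprev : 0 < Yf m1 m2 m3 d2 q2 v 3 (k-1) := by nlinarith
        exact ih (k-1) (by omega) (by omega) (by omega) hfprev hgprev hs1.le
  have hsig : ∀ k, 2 ≤ k → k ≤ m3 → 0 < Yf m1 m2 m3 d1 q1 u 3 k →
      0 < Yf m1 m2 m3 d2 q2 v 3 k → 0 < r - u 3 k - v 3 k := by
    intro k h2 hm hfk hgk
    by_contra h
    exact lemA k h2 hm hfk hgk (le_of_not_gt h)
  -- main invariant
  have hR : ∀ k, 1 ≤ k → k ≤ m3 → Yf m1 m2 m3 d2 q2 v 3 k ≤ 0 →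
      Yf m1 m2 m3 d1 q1 u 3 k * v 3 k - Yf m1 m2 m3 d2 q2 v 3 k * u 3 k ≤ 0 ∧
        Yf m1 m2 m3 d1 q1 u 3 k ≤ 0 := by
    intro k
    induction k using Nat.strong_induction_on with
    | _ k ih =>
      intro hk1 hkm hgk
      by_cases hk : k = 1
      · subst hk
        rw [hf1, hg1]
        norm_num
      · obtain ⟨j, rfl⟩ : ∃ j, k = j + 1 := ⟨k - 1, by omega⟩
        have hj1 : 1 ≤ j := by omega
        have hjm : j + 1 ≤ m3 := hkm
        have huj := hu j hj1 (by omega)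
        have hvj := hv j hj1 (by omega)
        have huk := hu (j+1) (by omega) hkm
        have hvk := hv (j+1) (by omega) hkm
        have hrecf := hfrec j hj1 hjm
        have hrecg := hgrec j hj1 hjm
        -- E3 : f (j+1) * v j - g (j+1) * u j = f j * v j - g j * u j
        have hE3 : Yf m1 m2 m3 d1 q1 u 3 (j+1) * v 3 j
            - Yf m1 m2 m3 d2 q2 v 3 (j+1) * u 3 j
            = Yf m1 m2 m3 d1 q1 u 3 j * v 3 j - Yf m1 m2 m3 d2 q2 v 3 j * u 3 j := by
          linear_combination (v 3 j) * hrecf - (u 3 j) * hrecg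
        -- step 1: D j ≤ 0
        have hDj : Yf m1 m2 m3 d1 q1 u 3 j * v 3 j
            - Yf m1 m2 m3 d2 q2 v 3 j * u 3 j ≤ 0 := by
          by_cases hgj : Yf m1 m2 m3 d2 q2 v 3 j ≤ 0
          · exact (ih j (by omega) hj1 (by omega) hgj).1
          · push_neg at hgj
            by_contra hD
            push_neg at hD
            have hfj : 0 < Yf m1 m2 m3 d1 q1 u 3 j := by
              by_contra hfj
              push_neg at hfj
              nlinarith
            have hj2 : 2 ≤ j := by
              rcases eq_or_lt_of_le hj1 with h | h
              · exfalso; rw [← h, hg1] at hgj; exact lt_irrefl 0 hgj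
              · exact h
            have hsj := hsig j hj2 (by omega) hfj hgj
            nlinarith
        -- step 2: f (j+1) ≤ 0
        have hfk : Yf m1 m2 m3 d1 q1 u 3 (j+1) ≤ 0 := by
          have h1 : Yf m1 m2 m3 d1 q1 u 3 (j+1) * v 3 j ≤ 0 := by nlinarith
          by_contra hc
          push_neg at hc
          nlinarith
        refine ⟨?_, hfk⟩
        -- step 3: D (j+1) ≤ 0 via the key identity
        have hfvk := hfval (j+1) (by omega) hkm
        have hgvk := hgval (j+1) (by omega) hkm
        simp only [Nat.add_sub_cancel] at hfvk hgvk
        have key : (d1+q1) * (d2+q2) *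
            (Yf m1 m2 m3 d1 q1 u 3 (j+1) * v 3 (j+1)
              - Yf m1 m2 m3 d2 q2 v 3 (j+1) * u 3 (j+1))
            = d2 * (d1+q1) * (Yf m1 m2 m3 d1 q1 u 3 (j+1) * v 3 j
                - Yf m1 m2 m3 d2 q2 v 3 (j+1) * u 3 j)
              + (q1 * d2 - q2 * d1) * (Yf m1 m2 m3 d2 q2 v 3 (j+1) * u 3 j)
              + ((d2+q2) - (d1+q1)) *
                (Yf m1 m2 m3 d1 q1 u 3 (j+1) * Yf m1 m2 m3 d2 q2 v 3 (j+1)) := by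
          linear_combination ((d1+q1) * Yf m1 m2 m3 d1 q1 u 3 (j+1)) * hgvk
            - ((d2+q2) * Yf m1 m2 m3 d2 q2 v 3 (j+1)) * hfvk
        have hDj' : Yf m1 m2 m3 d1 q1 u 3 (j+1) * v 3 j
            - Yf m1 m2 m3 d2 q2 v 3 (j+1) * u 3 j ≤ 0 := by rw [hE3]; exact hDj
        have T1 : d2 * (d1+q1) * (Yf m1 m2 m3 d1 q1 u 3 (j+1) * v 3 j
            - Yf m1 m2 m3 d2 q2 v 3 (j+1) * u 3 j) ≤ 0 :=
          mul_nonpos_iff.mpr (Or.inl ⟨(mul_pos hd2 (by linarith : (0:ℝ) < d1 + q1)).le, hDj'⟩)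
        have T2 : (q1 * d2 - q2 * d1) * (Yf m1 m2 m3 d2 q2 v 3 (j+1) * u 3 j) ≤ 0 := by
          have h1 : Yf m1 m2 m3 d2 q2 v 3 (j+1) * u 3 j ≤ 0 :=
            mul_nonpos_iff.mpr (Or.inr ⟨hgk, huj.le⟩)
          exact mul_nonpos_iff.mpr (Or.inl ⟨by linarith, h1⟩)
        have T3 : ((d2+q2) - (d1+q1)) *
            (Yf m1 m2 m3 d1 q1 u 3 (j+1) * Yf m1 m2 m3 d2 q2 v 3 (j+1)) ≤ 0 := by
          have h1 := mul_nonneg (neg_nonneg.2 hfk) (neg_nonneg.2 hgk)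
          rw [neg_mul_neg] at h1
          exact mul_nonpos_iff.mpr (Or.inr ⟨by linarith, h1⟩)
        nlinarith [key, T1, T2, T3, mul_pos (by linarith : (0:ℝ) < d1 + q1)
          (by linarith : (0:ℝ) < d2 + q2)]
  -- conclusion
  have hgm3 : 0 < Yf m1 m2 m3 d2 q2 v 3 m3 := by
    by_contra hg
    push_neg at hg
    have := (hR m3 (by omega) le_rfl hg).2
    linarith
  refine ⟨hgm3, ?_⟩
  have := hsig m3 hm3 le_rfl hf hgm3
  linarith
end
end
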